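/- Discrete Pontryagin Maximum Principle for the Strang-split Lindblad qubit (Proposition): Fix γ > 0, Δt > 0, α > 0, N ≥ 1, an initial 2×2 complex matrix ρ₀, and the target ρ_tgt := !![1,0;0,0]. For a control sequence u = (u_0,…,u_{N−1}) ∈ ℝᴺ define states ρ_0(u) := ρ₀, ρ_{k+1}(u) := F⁽²⁾(ρ_k(u), u_k), and the Bolza cost J(u) := Σ_{k=0}^{N−1} α·u_k²·Δt + (1 − Re trace(ρ_N(u) · ρ_tgt)). Suppose u* is a local minimizer of J over ℝᴺ. Define the costates backward by P_N := −ρ_tgt and P_k := F*(P_{k+1}, u_k*) for k = N−1,…,1, where F*(X, v) := Φ*^{Δt/2}( U(v)ᴴ · Φ*^{Δt/2}(X) · U(v) ), Φ*^τ(X) := E₀(τ)ᴴ·X·E₀(τ) + E₁(τ)ᴴ·X·E₁(τ), and U(v) := exp(−i·Δt·H(v)). Then for every k = 0,…,N−1, the real function v ↦ α·v²·Δt + Re trace( P_{k+1}ᴴ · F⁽²⁾(ρ_k(u*), v) ) has derivative zero at v = u_k*. -/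

import Mathlib

open Matrix
open scoped ComplexOrder
noncomputable section

/-- Pauli matrix σx. -/
def σx : Matrix (Fin 2) (Fin 2) ℂ := !![0, 1; 1, 0]

/-- The control Hamiltonian H(u) = (u/2) σx. -/
def Hctrl (u : ℝ) : Matrix (Fin 2) (Fin 2) ℂ := ((u : ℂ) / 2) • σx

/-- Decay probability p(τ) = 1 − e^{−γτ}. -/
def pAD (γ τ : ℝ) : ℝ := 1 - Real.exp (-(γ * τ))

/-- Kraus operator E₀(τ). -/
def E₀ (γ τ : ℝ) : Matrix (Fin 2) (Fin 2) ℂ :=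
  !![1, 0; 0, (Real.sqrt (1 - pAD γ τ) : ℂ)]

/-- Kraus operator E₁(τ). -/
def E₁ (γ τ : ℝ) : Matrix (Fin 2) (Fin 2) ℂ :=
  !![0, (Real.sqrt (pAD γ τ) : ℂ); 0, 0]

/-- The amplitude-damping channel Φ^τ. -/
def ΦAD (γ τ : ℝ) (ρ : Matrix (Fin 2) (Fin 2) ℂ) : Matrix (Fin 2) (Fin 2) ℂ :=
  E₀ γ τ * ρ * (E₀ γ τ)ᴴ + E₁ γ τ * ρ * (E₁ γ τ)ᴴ

/-- The unitary propagator U = exp(−i Δt H(u)). -/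
def Uprop (Δt u : ℝ) : Matrix (Fin 2) (Fin 2) ℂ :=
  NormedSpace.exp ((-Complex.I * (Δt : ℂ)) • Hctrl u)

/-- The Strang-split Lindblad integrator F⁽²⁾(ρ, u). -/
def Fstrang (γ Δt : ℝ) (ρ : Matrix (Fin 2) (Fin 2) ℂ) (u : ℝ) : Matrix (Fin 2) (Fin 2) ℂ :=
  ΦAD γ (Δt / 2) (Uprop Δt u * ΦAD γ (Δt / 2) ρ * (Uprop Δt u)ᴴ)

/-- The dual (Heisenberg-picture) amplitude-damping channel Φ*^τ. -/
def ΦADdual (γ τ : ℝ) (X : Matrix (Fin 2) (Fin 2) ℂ) : Matrix (Fin 2) (Fin 2) ℂ :=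
  (E₀ γ τ)ᴴ * X * E₀ γ τ + (E₁ γ τ)ᴴ * X * E₁ γ τ

/-- The dual Strang-split map F*(X, v). -/
def Fdual (γ Δt : ℝ) (X : Matrix (Fin 2) (Fin 2) ℂ) (v : ℝ) : Matrix (Fin 2) (Fin 2) ℂ :=
  ΦADdual γ (Δt / 2) ((Uprop Δt v)ᴴ * ΦADdual γ (Δt / 2) X * Uprop Δt v)

/-- The ground-state projector ρ_tgt = |0⟩⟨0|. -/
def ρtgt : Matrix (Fin 2) (Fin 2) ℂ := !![1, 0; 0, 0]

/-- The discrete state trajectory ρ_k(u) generated by the Strang-split integrator. -/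
def qTraj (γ Δt : ℝ) (ρ₀ : Matrix (Fin 2) (Fin 2) ℂ) {N : ℕ} (u : Fin N → ℝ) :
    ℕ → Matrix (Fin 2) (Fin 2) ℂ
  | 0 => ρ₀
  | (k + 1) =>
      if h : k < N then Fstrang γ Δt (qTraj γ Δt ρ₀ u k) (u ⟨k, h⟩)
      else qTraj γ Δt ρ₀ u k

/-- The backward costate sequence, indexed so that `qCostate γ Δt ρ₀ u j = P_{N-j}`:
`P_N = −ρ_tgt` and `P_k = F*(P_{k+1}, u_k)`. -/
def qCostate (γ Δt : ℝ) (ρ₀ : Matrix (Fin 2) (Fin 2) ℂ) {N : ℕ} (u : Fin N → ℝ) :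
    ℕ → Matrix (Fin 2) (Fin 2) ℂ
  | 0 => -ρtgt
  | (j + 1) =>
      if h : N - (j + 1) < N then
        Fdual γ Δt (qCostate γ Δt ρ₀ u j) (u ⟨N - (j + 1), h⟩)
      else qCostate γ Δt ρ₀ u j

/-- The discrete Bolza cost. -/
def qCost (γ Δt α : ℝ) (ρ₀ : Matrix (Fin 2) (Fin 2) ℂ) {N : ℕ} (u : Fin N → ℝ) : ℝ :=
  (∑ k : Fin N, α * u k ^ 2 * Δt) + (1 - ((qTraj γ Δt ρ₀ u N * ρtgt).trace).re)

/-!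
Perturbing only the control `u_k` leaves `ρ_0, …, ρ_k` unchanged, and because the costates are
propagated by the adjoint map (`tr(F(ρ, v) P) = tr(ρ F*(P, v))`), the terminal cost
`1 − Re tr(ρ_N ρ_tgt) = 1 + Re tr(ρ_N P_N)` equals `1 + Re tr(F(ρ_k, u_k) P_{k+1})`. Since the
costates are Hermitian, the cost as a function of `u_k` alone is therefore the discrete Hamiltonian
of step `k` plus a constant; it has a local minimum at `u*_k`, and being differentiable (the
propagator is a matrix exponential), its derivative vanishes there.
-/

/-- The discrete Hamiltonian of step `k` is `qHam γ Δt α ρ_k P_{k+1}`. -/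
def qHam (γ Δt α : ℝ) (ρ P : Matrix (Fin 2) (Fin 2) ℂ) (v : ℝ) : ℝ :=
  α * v ^ 2 * Δt + ((Pᴴ * Fstrang γ Δt ρ v).trace).re

section Differentiability

attribute [local instance] Matrix.linftyOpNormedRing Matrix.linftyOpNormedAlgebra

theorem Differentiable.re_trace {n : Type*} [Fintype n] [DecidableEq n] {f : ℝ → Matrix n n ℂ}
    (hf : Differentiable ℝ f) : Differentiable ℝ fun v => (f v).trace.re :=
  (Complex.reCLM.comp (LinearMap.toContinuousLinearMap
    ((Matrix.traceLinearMap n ℂ ℂ).restrictScalars ℝ))).differentiable.comp hf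

theorem Uprop_eq_exp_smul (Δt v : ℝ) :
    Uprop Δt v = NormedSpace.exp (v • ((-Complex.I * Δt / 2) • σx)) := by
  rw [Uprop, Hctrl, smul_smul, ← smul_assoc, Complex.real_smul]
  ring_nf

theorem conjTranspose_Uprop_eq_exp_smul (Δt v : ℝ) :
    (Uprop Δt v)ᴴ = NormedSpace.exp (v • ((-Complex.I * Δt / 2) • σx)ᴴ) := by
  rw [Uprop_eq_exp_smul, ← Matrix.exp_conjTranspose, Matrix.conjTranspose_smul, star_trivial]

theorem differentiable_Uprop (Δt : ℝ) : Differentiable ℝ (Uprop Δt) := fun v => by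
  simp only [funext (Uprop_eq_exp_smul Δt)]
  exact (hasDerivAt_exp_smul_const _ v).differentiableAt

theorem differentiable_conjTranspose_Uprop (Δt : ℝ) :
    Differentiable ℝ fun v => (Uprop Δt v)ᴴ := fun v => by
  simp only [conjTranspose_Uprop_eq_exp_smul]
  exact (hasDerivAt_exp_smul_const _ v).differentiableAt

theorem differentiable_Fstrang (γ Δt : ℝ) (ρ : Matrix (Fin 2) (Fin 2) ℂ) :
    Differentiable ℝ (Fstrang γ Δt ρ) := by
  have hU := differentiable_Uprop Δt
  have hUH := differentiable_conjTranspose_Uprop Δt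
  unfold Fstrang ΦAD
  fun_prop

theorem differentiable_qHam (γ Δt α : ℝ) (ρ P : Matrix (Fin 2) (Fin 2) ℂ) :
    Differentiable ℝ (qHam γ Δt α ρ P) :=
  (by fun_prop : Differentiable ℝ fun v : ℝ => α * v ^ 2 * Δt).add
    (((differentiable_Fstrang γ Δt ρ).const_mul Pᴴ).re_trace)

end Differentiability

section Duality

theorem Matrix.trace_mul_mul_mul_rotate {n R : Type*} [Fintype n] [CommSemiring R]
    (A B C D : Matrix n n R) : (A * B * C * D).trace = (B * (C * D * A)).trace := by
  rw [Matrix.mul_assoc, Matrix.mul_assoc, Matrix.trace_mul_comm A]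
  simp only [Matrix.mul_assoc]

theorem trace_ΦAD_mul (γ τ : ℝ) (X Y : Matrix (Fin 2) (Fin 2) ℂ) :
    (ΦAD γ τ X * Y).trace = (X * ΦADdual γ τ Y).trace := by
  rw [ΦAD, ΦADdual, add_mul, mul_add, trace_add, trace_add, trace_mul_mul_mul_rotate,
    trace_mul_mul_mul_rotate]

theorem trace_Fstrang_mul (γ Δt u : ℝ) (ρ Y : Matrix (Fin 2) (Fin 2) ℂ) :
    (Fstrang γ Δt ρ u * Y).trace = (ρ * Fdual γ Δt Y u).trace := by
  rw [Fstrang, Fdual, trace_ΦAD_mul, trace_mul_mul_mul_rotate, trace_ΦAD_mul]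

theorem Matrix.IsHermitian.ΦADdual {γ τ : ℝ} {X : Matrix (Fin 2) (Fin 2) ℂ}
    (hX : X.IsHermitian) : (ΦADdual γ τ X).IsHermitian :=
  (isHermitian_conjTranspose_mul_mul _ hX).add (isHermitian_conjTranspose_mul_mul _ hX)

theorem Matrix.IsHermitian.Fdual {γ Δt v : ℝ} {X : Matrix (Fin 2) (Fin 2) ℂ}
    (hX : X.IsHermitian) : (Fdual γ Δt X v).IsHermitian :=
  (isHermitian_conjTranspose_mul_mul _ hX.ΦADdual).ΦADdual

end Duality

section Trajectories

variable {γ Δt : ℝ} {ρ₀ : Matrix (Fin 2) (Fin 2) ℂ} {N : ℕ}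

theorem qTraj_succ_of_lt (u : Fin N → ℝ) {k : ℕ} (hk : k < N) :
    qTraj γ Δt ρ₀ u (k + 1) = Fstrang γ Δt (qTraj γ Δt ρ₀ u k) (u ⟨k, hk⟩) := by
  rw [qTraj, dif_pos hk]

theorem qCostate_succ_of_lt (u : Fin N → ℝ) {m : ℕ} (hm : m < N) :
    qCostate γ Δt ρ₀ u (m + 1) =
      Fdual γ Δt (qCostate γ Δt ρ₀ u m) (u ⟨N - (m + 1), by omega⟩) := by
  rw [qCostate, dif_pos (by omega)]

theorem qTraj_congr {u w : Fin N → ℝ} {j : ℕ} (h : ∀ i : Fin N, (i : ℕ) < j → u i = w i) :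
    qTraj γ Δt ρ₀ u j = qTraj γ Δt ρ₀ w j := by
  induction j with
  | zero => rfl
  | succ j ih =>
    have h' : ∀ i : Fin N, (i : ℕ) < j → u i = w i := fun i hi => h i (by omega)
    by_cases hj : j < N
    · rw [qTraj_succ_of_lt u hj, qTraj_succ_of_lt w hj, ih h', h _ (Nat.lt_succ_self j)]
    · rw [qTraj, qTraj, dif_neg hj, dif_neg hj, ih h']

theorem qTraj_update_succ (u : Fin N → ℝ) (k : Fin N) (v : ℝ) :
    qTraj γ Δt ρ₀ (Function.update u k v) (k + 1) = Fstrang γ Δt (qTraj γ Δt ρ₀ u k) v := by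
  rw [qTraj_succ_of_lt _ k.isLt, Fin.eta, Function.update_self,
    qTraj_congr fun i hi => Function.update_of_ne (Fin.ne_of_lt hi) v u]

theorem isHermitian_qCostate (u : Fin N → ℝ) (j : ℕ) : (qCostate γ Δt ρ₀ u j).IsHermitian := by
  induction j with
  | zero =>
    refine Matrix.IsHermitian.neg ?_
    ext i j
    fin_cases i <;> fin_cases j <;> simp [ρtgt]
  | succ j ih =>
    rw [qCostate]
    split
    · exact ih.Fdual
    · exact ih

theorem trace_qTraj_mul_qCostate_eq (u w : Fin N → ℝ) {m : ℕ} (hm : m ≤ N)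
    (h : ∀ i : Fin N, N - m ≤ i → u i = w i) :
    (qTraj γ Δt ρ₀ u N * qCostate γ Δt ρ₀ w 0).trace =
      (qTraj γ Δt ρ₀ u (N - m) * qCostate γ Δt ρ₀ w m).trace := by
  induction m with
  | zero => rfl
  | succ m ih =>
    have hstep : N - m = N - (m + 1) + 1 := by omega
    rw [ih (by omega) fun i hi => h i (by omega), hstep, qTraj_succ_of_lt u (by omega),
      trace_Fstrang_mul, qCostate_succ_of_lt w (by omega), h _ le_rfl]

theorem qCost_update (γ Δt α : ℝ) (ρ₀ : Matrix (Fin 2) (Fin 2) ℂ) (u : Fin N → ℝ) (k : Fin N)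
    (v : ℝ) :
    qCost γ Δt α ρ₀ (Function.update u k v) =
      qHam γ Δt α (qTraj γ Δt ρ₀ u k) (qCostate γ Δt ρ₀ u (N - (k + 1))) v +
        ((∑ j ∈ Finset.univ.erase k, α * u j ^ 2 * Δt) + 1) := by
  have hsum : ∑ j, α * Function.update u k v j ^ 2 * Δt =
      α * v ^ 2 * Δt + ∑ j ∈ Finset.univ.erase k, α * u j ^ 2 * Δt := by
    rw [← Finset.add_sum_erase _ _ (Finset.mem_univ k), Function.update_self]
    congr 1
    exact Finset.sum_congr rfl fun j hj => by
      rw [Function.update_of_ne (Finset.ne_of_mem_erase hj)]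
  have hpair := trace_qTraj_mul_qCostate_eq (γ := γ) (Δt := Δt) (ρ₀ := ρ₀)
    (Function.update u k v) u (m := N - (k + 1)) (by omega)
    fun i hi => Function.update_of_ne (Fin.ne_of_gt (by omega)) v u
  rw [Nat.sub_sub_self k.isLt, qTraj_update_succ] at hpair
  rw [qCost, qHam, hsum, (isHermitian_qCostate u _).eq,
    Matrix.trace_mul_comm _ (Fstrang _ _ _ _), ← hpair]
  simp only [qCostate, Matrix.mul_neg, Matrix.trace_neg, Complex.neg_re]
  ring

end Trajectories

theorem discrete_PMP_strang_lindblad_qubit_general (γ Δt α : ℝ) (N : ℕ) (ρ₀ : Matrix (Fin 2) (Fin 2) ℂ)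
    (ustar : Fin N → ℝ)
    (hmin : IsLocalMin (fun u : Fin N → ℝ => qCost γ Δt α ρ₀ u) ustar) :
    ∀ k : Fin N,
      HasDerivAt
        (fun v : ℝ => α * v ^ 2 * Δt +
          (((qCostate γ Δt ρ₀ ustar (N - ((k : ℕ) + 1)))ᴴ *
              Fstrang γ Δt (qTraj γ Δt ρ₀ ustar (k : ℕ)) v).trace).re)
        0 (ustar k) := by
  intro k
  have hline : IsLocalMin (qCost γ Δt α ρ₀ ∘ Function.update ustar k) (ustar k) :=
    IsLocalMin.comp_continuous (by rwa [Function.update_eq_self])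
      (continuous_const.update k continuous_id).continuousAt
  have hloc : IsLocalMin (qHam γ Δt α (qTraj γ Δt ρ₀ ustar k)
      (qCostate γ Δt ρ₀ ustar (N - (k + 1)))) (ustar k) :=
    hline.mono fun v hv => by
      simpa only [Function.comp_apply, qCost_update, add_le_add_iff_right] using hv
  have hd := (differentiable_qHam γ Δt α (qTraj γ Δt ρ₀ ustar k)
    (qCostate γ Δt ρ₀ ustar (N - (k + 1))) (ustar k)).hasDerivAt
  rwa [hloc.deriv_eq_zero] at hd

/-- Discrete Pontryagin Maximum Principle for the Strang-split Lindblad qubit: at a local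
minimizer of the Bolza cost, for each k the function
`v ↦ α v² Δt + Re tr(P_{k+1}ᴴ F⁽²⁾(ρ_k(u*), v))` has derivative zero at `v = u*_k`. -/
theorem discrete_PMP_strang_lindblad_qubit (γ Δt α : ℝ) (hγ : 0 < γ) (hΔt : 0 < Δt)
    (hα : 0 < α) (N : ℕ) (hN : 1 ≤ N) (ρ₀ : Matrix (Fin 2) (Fin 2) ℂ)
    (ustar : Fin N → ℝ)
    (hmin : IsLocalMin (fun u : Fin N → ℝ => qCost γ Δt α ρ₀ u) ustar) :
    ∀ k : Fin N,
      HasDerivAt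
        (fun v : ℝ => α * v ^ 2 * Δt +
          (((qCostate γ Δt ρ₀ ustar (N - ((k : ℕ) + 1)))ᴴ *
              Fstrang γ Δt (qTraj γ Δt ρ₀ ustar (k : ℕ)) v).trace).re)
        0 (ustar k) :=
  discrete_PMP_strang_lindblad_qubit_general γ Δt α N ρ₀ ustar hmin
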